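/- arXiv:2007.01412 — 2 statements merged into one kernel-verified Lean document; each statement's English description precedes it below -/
import Mathlib

section
/- Let a > 0 be an irrational real number, and for an integer k ≥ 4 set N_a(k−2) := min( π²·⌈a·(k−2)/(a+1)⌉²/a² , π²·⌈(k−2)/(a+1)⌉² ) and ĉ_a(k) := (N_a(k−2) − π²·k²/(a+1)²)/k. Then the set of cluster points of the sequence (ĉ_a(k))_{k≥4} is exactly the closed interval [−4π²/(a+1)², −2π²/(a+1)²]. -/
open Real Filter Topology Set

/-!
Put `θ = 1 / (a + 1)`, `s = (k - 2) θ` and `F = fract s`. Since `a s = (k - 2) - s`, both ceilings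
in `N_a(k - 2)` are determined by `F`, and `N_a(k - 2) = π² (s + g)²` with
`g = min (F / a) (1 - F) ∈ [0, θ]`; hence `ĉ_a(k) = 2π²θ (g - 2θ) + O(1 / k)`. As `θ` is irrational,
every point of the circle `ℝ / ℤ` is a cluster point of `(k - 2) θ`, and `g` is a continuous
function on that circle with range `[0, θ]`. So the cluster points of `g` fill `[0, θ]`, and those
of `ĉ_a` are its affine image `[-4π²θ², -2π²θ²]`.
-/

section ClusterPoints

variable {α X : Type*} [TopologicalSpace X]

theorem mapClusterPt_atTop_comp_add_nat_iff {u : ℕ → X} {x : X} (k : ℕ) :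
    MapClusterPt x atTop (fun n => u (n + k)) ↔ MapClusterPt x atTop u := by
  rw [← Function.comp_def, mapClusterPt_comp, map_add_atTop_eq_nat]

theorem MapClusterPt.add_of_tendsto_zero [AddZeroClass X] [ContinuousAdd X] {l : Filter α}
    {u e : α → X} {x : X} (hu : MapClusterPt x l u) (he : Tendsto e l (𝓝 0)) :
    MapClusterPt x l (u + e) := by
  rw [mapClusterPt_iff_frequently] at hu ⊢
  intro s hs
  have hadd : {q : X × X | q.1 + q.2 ∈ s} ∈ 𝓝 (x, 0) :=
    continuous_add.continuousAt (x := (x, 0)) (by simpa using hs)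
  obtain ⟨V, hV, W, hW, hVW⟩ := mem_nhds_prod_iff.1 hadd
  exact ((hu V hV).and_eventually (he hW)).mono fun n hn => hVW (a := (u n, e n)) hn

theorem mapClusterPt_add_iff_of_tendsto_zero [AddGroup X] [IsTopologicalAddGroup X]
    {l : Filter α} {u e : α → X} {x : X} (he : Tendsto e l (𝓝 0)) :
    MapClusterPt x l (u + e) ↔ MapClusterPt x l u := by
  refine ⟨fun h => ?_, fun h => h.add_of_tendsto_zero he⟩
  have h' := h.add_of_tendsto_zero (e := -e) (neg_zero (G := X) ▸ he.neg)
  rwa [add_neg_cancel_right] at h'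

theorem Homeomorph.setOf_mapClusterPt_comp {Y : Type*} [TopologicalSpace Y] (h : X ≃ₜ Y)
    (l : Filter α) (u : α → X) :
    {y | MapClusterPt y l (h ∘ u)} = h '' {x | MapClusterPt x l u} := by
  ext y
  refine ⟨fun hy => ⟨h.symm y, ?_, h.apply_symm_apply y⟩, ?_⟩
  · simpa [Function.comp_def] using hy.continuousAt_comp h.symm.continuous.continuousAt
  · rintro ⟨x, hx, rfl⟩
    exact hx.continuousAt_comp h.continuous.continuousAt

/-- The multiples of `θ` are dense in the compact group `AddCircle p`, and in a compact group the
cluster points of `n • θ`, `n : ℕ`, form the closure of the `ℤ`-multiples. -/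
theorem Function.Periodic.mapClusterPt_atTop_nat_mul {f : ℝ → X} {p θ : ℝ} (hp : 0 < p)
    (hf : Function.Periodic f p) (hc : Continuous f) (hθ : Irrational (θ / p)) (t : ℝ) :
    MapClusterPt (f t) atTop (fun n : ℕ => f (n * θ)) := by
  have : Fact (0 < p) := ⟨hp⟩
  have hlift : Continuous (hf.lift : AddCircle p → X) := continuous_quot_lift _ hc
  have h := (mapClusterPt_atTop_nsmul_tfae (t : AddCircle p) θ |>.out 0 3).2 <| by
    rw [(AddCircle.denseRange_zsmul_coe_iff.2 hθ).closure_range]; exact mem_univ _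
  convert h.continuousAt_comp hlift.continuousAt using 2 with n
  · exact (hf.lift_coe t).symm
  · rw [Function.comp_apply, ← AddCircle.coe_nsmul, nsmul_eq_mul]
    exact (hf.lift_coe _).symm

end ClusterPoints

theorem tendsto_div_natCast_add_const_of_abs_le {b : ℕ → ℝ} {B : ℝ} (hb : ∀ n, |b n| ≤ B)
    (c : ℝ) : Tendsto (fun n : ℕ => b n / (n + c)) atTop (𝓝 0) := by
  have hden : Tendsto (fun n : ℕ => (n : ℝ) + c) atTop atTop :=
    tendsto_atTop_add_const_right _ c tendsto_natCast_atTop_atTop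
  refine squeeze_zero_norm' ?_ ((tendsto_const_nhds (x := B)).div_atTop hden)
  filter_upwards [hden.eventually_gt_atTop 0] with n hn
  rw [norm_div, Real.norm_of_nonneg hn.le]
  exact div_le_div_of_nonneg_right (hb n) hn.le

theorem min_pow_of_nonneg {R : Type*} [Semiring R] [LinearOrder R] [IsOrderedRing R] {x y : R}
    (hx : 0 ≤ x) (hy : 0 ≤ y) (n : ℕ) : min (x ^ n) (y ^ n) = min x y ^ n := by
  rcases le_total x y with h | h
  · rw [min_eq_left h, min_eq_left (pow_le_pow_left₀ hx h n)]
  · rw [min_eq_right h, min_eq_right (pow_le_pow_left₀ hy h n)]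

/-- For `s = m / (a + 1)` with `m` an integer and `s ∉ ℤ`, `s + gap a s` is the least point of
`ℤ ∪ a⁻¹ℤ` above `s`. -/
noncomputable def gap (a s : ℝ) : ℝ :=
  min (Int.fract s / a) (1 - Int.fract s)

namespace gap

variable {a : ℝ}

theorem periodic (a : ℝ) : Function.Periodic (gap a) 1 := fun s => by
  simp only [gap, Int.fract_add_one]

theorem continuous (ha : 0 < a) : Continuous (gap a) := by
  refine ContinuousOn.comp_fract'' (f := fun t => min (t / a) (1 - t)) (by fun_prop) ?_
  simp [ha.le]

theorem mem_Icc (ha : 0 < a) (s : ℝ) : gap a s ∈ Icc 0 (a + 1)⁻¹ := by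
  have hF := Int.fract_nonneg s
  have hF1 := Int.fract_lt_one s
  refine ⟨le_min (by positivity) (by linarith), ?_⟩
  rw [← one_div, le_div_iff₀' (by linarith)]
  calc (a + 1) * gap a s = a * gap a s + gap a s := by ring
    _ ≤ a * (Int.fract s / a) + (1 - Int.fract s) :=
      add_le_add (mul_le_mul_of_nonneg_left (min_le_left _ _) ha.le) (min_le_right _ _)
    _ = 1 := by field_simp; ring

theorem apply_mul (ha : 0 < a) {y : ℝ} (hy : y ∈ Icc 0 (a + 1)⁻¹) : gap a (a * y) = y := by
  have hy1 : y * (a + 1) ≤ 1 := by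
    rw [← le_div_iff₀ (by linarith), one_div]; exact hy.2
  have hfract : Int.fract (a * y) = a * y :=
    Int.fract_eq_self.2 ⟨by nlinarith [hy.1], by nlinarith⟩
  rw [gap, hfract, mul_div_cancel_left₀ y ha.ne', min_eq_left (by linarith)]

end gap

theorem min_ceil_eq_add_gap {a s : ℝ} {m : ℤ} (ha : 0 < a) (hm : (a + 1) * s = m)
    (hs : Int.fract s ≠ 0) :
    min ((⌈a * s⌉ : ℝ) / a) ⌈s⌉ = s + gap a s := by
  have hceil : (⌈s⌉ : ℝ) = s + (1 - Int.fract s) := by linarith [Int.ceil_sub_self_eq hs]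
  have hceil_mul : (⌈a * s⌉ : ℝ) = a * s + Int.fract s := by
    rw [show a * s = -s + m by linarith, Int.ceil_add_intCast, Int.ceil_neg]
    push_cast
    rw [Int.fract]; ring
  rw [hceil, hceil_mul, add_div, mul_div_cancel_left₀ s ha.ne', gap, min_add_add_left]

theorem min_ceil_sq_eq {a c : ℝ} (ha : 0 < a) (hirr : Irrational a) (hc : 0 ≤ c) {m : ℕ}
    (hm : m ≠ 0) :
    min (c * (⌈a * (m : ℝ) / (a + 1)⌉ : ℝ) ^ 2 / a ^ 2) (c * (⌈(m : ℝ) / (a + 1)⌉ : ℝ) ^ 2)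
      = c * ((m : ℝ) / (a + 1) + gap a (m / (a + 1))) ^ 2 := by
  have hs0 : 0 ≤ (m : ℝ) / (a + 1) := by positivity
  have hfract : Int.fract ((m : ℝ) / (a + 1)) ≠ 0 := fun h0 => by
    obtain ⟨z, hz⟩ := Int.fract_eq_zero_iff.1 h0
    have hirr' := (hirr.add_natCast 1).natCast_div hm
    rw [Nat.cast_one] at hirr'
    exact hirr'.ne_int z hz.symm
  have hceil : 0 ≤ (⌈(m : ℝ) / (a + 1)⌉ : ℝ) := by exact_mod_cast Int.ceil_nonneg hs0
  have hceil_mul : 0 ≤ (⌈a * ((m : ℝ) / (a + 1))⌉ : ℝ) / a :=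
    div_nonneg (by exact_mod_cast Int.ceil_nonneg (by positivity)) ha.le
  rw [mul_div_assoc a, ← min_ceil_eq_add_gap ha (m := m) (by push_cast; field_simp) hfract,
    ← min_pow_of_nonneg hceil_mul hceil, mul_min_of_nonneg _ _ hc, div_pow, mul_div_assoc]

theorem min_ceil_sq_sub_div_eq {a : ℝ} (ha : 0 < a) (hirr : Irrational a) {m : ℕ} (hm : m ≠ 0) :
    (min (π ^ 2 * (⌈a * (m : ℝ) / (a + 1)⌉ : ℝ) ^ 2 / a ^ 2) (π ^ 2 * (⌈(m : ℝ) / (a + 1)⌉ : ℝ) ^ 2)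
        - π ^ 2 * ((m : ℝ) + 2) ^ 2 / (a + 1) ^ 2) / ((m : ℝ) + 2)
      = 2 * π ^ 2 * (a + 1)⁻¹ * gap a (m / (a + 1)) + -(4 * π ^ 2 * (a + 1)⁻¹ ^ 2)
        + π ^ 2 * (gap a (m / (a + 1)) - 2 * (a + 1)⁻¹) ^ 2 / ((m : ℝ) + 2) := by
  rw [min_ceil_sq_eq ha hirr (sq_nonneg π) hm]
  field_simp
  ring

theorem setOf_mapClusterPt_gap {a : ℝ} (ha : 0 < a) (hirr : Irrational a) (k : ℕ) :
    {y | MapClusterPt y atTop (fun n : ℕ => gap a ((n + k) / (a + 1)))} = Icc 0 (a + 1)⁻¹ := by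
  ext y
  refine ⟨fun hy => isClosed_Icc.mem_of_mapClusterPt hy (.of_forall fun n => gap.mem_Icc ha _),
    fun hy => ?_⟩
  have hθ : Irrational ((a + 1)⁻¹ / 1) := by
    rw [div_one]; exact_mod_cast (hirr.add_natCast 1).inv
  have h := (gap.periodic a).mapClusterPt_atTop_nat_mul one_pos (gap.continuous ha) hθ (a * y)
  rw [gap.apply_mul ha hy, ← mapClusterPt_atTop_comp_add_nat_iff k] at h
  simpa [div_eq_mul_inv] using h

/-- Irrational case of the last theorem of Section 6.2 (Dirichlet version):
the cluster points of `(ĉ_a(k))_{k≥4}` form exactly `[−4π²/(a+1)², −2π²/(a+1)²]`. -/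
theorem stmt7 (a : ℝ) (ha : 0 < a) (hirr : Irrational a)
    (N chat : ℤ → ℝ)
    (hN : ∀ k : ℤ, N k = min (π ^ 2 * ((⌈a * (k : ℝ) / (a + 1)⌉ : ℝ)) ^ 2 / a ^ 2)
        (π ^ 2 * ((⌈(k : ℝ) / (a + 1)⌉ : ℝ)) ^ 2))
    (hchat : ∀ k : ℤ, chat k = (N (k - 2) - π ^ 2 * (k : ℝ) ^ 2 / (a + 1) ^ 2) / (k : ℝ)) :
    {x : ℝ | MapClusterPt x atTop (fun n : ℕ => chat ((n : ℤ) + 4))}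
      = Set.Icc (-(4 * π ^ 2 / (a + 1) ^ 2)) (-(2 * π ^ 2 / (a + 1) ^ 2)) := by
  set θ := (a + 1)⁻¹ with hθ
  set g : ℕ → ℝ := fun n => gap a ((n + (2 : ℕ)) / (a + 1)) with hg
  have hchat_eq : (fun n : ℕ => chat ((n : ℤ) + 4)) = (fun n => 2 * π ^ 2 * θ * g n +
      -(4 * π ^ 2 * θ ^ 2)) + fun n => π ^ 2 * (g n - 2 * θ) ^ 2 / ((n : ℝ) + 4) := by
    funext n
    have hdev := min_ceil_sq_sub_div_eq ha hirr (m := n + 2) (by omega)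
    push_cast at hdev
    rw [hchat, hN, Pi.add_apply]
    push_cast
    rw [show (n : ℝ) + 4 - 2 = n + 2 by ring, show (n : ℝ) + 4 = n + 2 + 2 by ring, hdev, hg, Nat.cast_ofNat]
  have herr : Tendsto (fun n : ℕ => π ^ 2 * (g n - 2 * θ) ^ 2 / ((n : ℝ) + 4)) atTop (𝓝 0) := by
    refine tendsto_div_natCast_add_const_of_abs_le (B := π ^ 2 * (2 * θ) ^ 2) (fun n => ?_) 4
    obtain ⟨hg0, hgθ⟩ : g n ∈ Icc 0 θ := gap.mem_Icc ha _
    rw [abs_of_nonneg (by positivity)]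
    exact mul_le_mul_of_nonneg_left (by nlinarith) (sq_nonneg π)
  let h : ℝ ≃ₜ ℝ := (Homeomorph.mulLeft₀ (2 * π ^ 2 * θ) (by positivity)).trans
    (Homeomorph.addRight (-(4 * π ^ 2 * θ ^ 2)))
  calc {x : ℝ | MapClusterPt x atTop (fun n : ℕ => chat ((n : ℤ) + 4))}
      = {x | MapClusterPt x atTop (h ∘ g)} := by
        ext x; rw [hchat_eq]; exact mapClusterPt_add_iff_of_tendsto_zero herr
    _ = h '' Icc 0 θ := by rw [h.setOf_mapClusterPt_comp, setOf_mapClusterPt_gap ha hirr 2]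
    _ = Icc (-(4 * π ^ 2 / (a + 1) ^ 2)) (-(2 * π ^ 2 / (a + 1) ^ 2)) := by
        rw [show ⇑h = fun y => 2 * π ^ 2 * θ * y + -(4 * π ^ 2 * θ ^ 2) from rfl,
          image_affine_Icc' (by positivity)]
        congr 1 <;> rw [hθ] <;> field_simp <;> ring
end

section
/- Fix an even integer m ≥ 4 and a real number L > 0. For each integer k ≥ 1 write k = j·m + r with integers j ≥ 0 and 1 ≤ r ≤ m, and define n(k) := π²·m²·(j + 1/2)²/L² if 1 ≤ r ≤ m/2, and n(k) := π²·m²·(j + 1)²/L² if m/2 < r ≤ m; set c(k) := (n(k) − π²·k²/L²)/k. Then the set of cluster points of the sequence (c(k))_{k≥1} is exactly { 2π²·s/L² : s an integer with 0 ≤ s ≤ m/2 − 1 }; in particular it has exactly m/2 elements. -/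
/-!
Put `h = m / 2`. Both formulas for `n(k)` say `n(k) = π²K²/L²`, where `K` is the least multiple
of `h` that is at least `k`, so with the gap `g = K - k ∈ {0, …, h - 1}` one gets
`c(k) = 2π²g/L² + π²g²/(L²k)`. The gap is `h`-periodic in `k` and takes every value in
`{0, …, h - 1}`, and the second term tends to `0`. Adding a null sequence does not change the
cluster points of a sequence, and the cluster points of a periodic sequence are its values.
-/

open Real Filter Topology

section ClusterPoints

variable {α G : Type*} [AddCommGroup G] [TopologicalSpace G] [IsTopologicalAddGroup G]

theorem MapClusterPt.of_tendsto_sub {F : Filter α} {u v : α → G} {x : G}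
    (hu : MapClusterPt x F u) (huv : Tendsto (u - v) F (𝓝 0)) : MapClusterPt x F v := by
  obtain ⟨U, hUF, hUx⟩ := mapClusterPt_iff_ultrafilter.1 hu
  refine mapClusterPt_iff_ultrafilter.2 ⟨U, hUF, ?_⟩
  simpa using hUx.sub (huv.mono_left hUF)

theorem setOf_mapClusterPt_eq_of_tendsto_sub {F : Filter α} {u v : α → G}
    (huv : Tendsto (u - v) F (𝓝 0)) :
    {x | MapClusterPt x F u} = {x | MapClusterPt x F v} := by
  have hvu : Tendsto (v - u) F (𝓝 0) := by
    rw [← neg_sub, ← neg_zero]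
    exact huv.neg
  ext x
  exact ⟨fun hx => hx.of_tendsto_sub huv, fun hx => hx.of_tendsto_sub hvu⟩

end ClusterPoints

namespace Function.Periodic

variable {X : Type*} {p : ℕ → X} {h : ℕ}

theorem finite_range (hp : Periodic p h) (hh : 0 < h) : (Set.range p).Finite :=
  ((Set.finite_Iio h).image p).subset <| by
    rintro _ ⟨n, rfl⟩
    exact ⟨n % h, Nat.mod_lt n hh, hp.map_mod_nat n⟩

theorem mapClusterPt_atTop [TopologicalSpace X] (hp : Periodic p h) (hh : 0 < h) (i : ℕ) :
    MapClusterPt (p i) atTop p := by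
  have hφ : Tendsto (fun j : ℕ => i + j * h) atTop atTop :=
    tendsto_atTop_mono (fun j => le_add_left (Nat.le_mul_of_pos_right j hh)) tendsto_id
  refine MapClusterPt.of_comp hφ (Tendsto.mapClusterPt ?_)
  have : p ∘ (fun j : ℕ => i + j * h) = fun _ => p i := funext fun j => hp.nat_mul j i
  rw [this]
  exact tendsto_const_nhds

theorem setOf_mapClusterPt_atTop [TopologicalSpace X] [T1Space X] (hp : Periodic p h)
    (hh : 0 < h) : {x | MapClusterPt x atTop p} = Set.range p := by
  ext x
  refine ⟨fun hx => ?_, ?_⟩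
  · exact (hp.finite_range hh).isClosed.mem_of_mapClusterPt hx
      (Eventually.of_forall fun n => Set.mem_range_self n)
  · rintro ⟨i, rfl⟩
    exact hp.mapClusterPt_atTop hh i

end Function.Periodic

/-- `n + 1 + ceilGap h n` is the least multiple of `h` that is at least `n + 1`. -/
def ceilGap (h n : ℕ) : ℕ := h - 1 - n % h

theorem ceilGap_periodic (h : ℕ) : Function.Periodic (ceilGap h) h := fun n => by
  simp only [ceilGap, Nat.add_mod_right]

theorem ceilGap_le (h n : ℕ) : ceilGap h n ≤ h - 1 := Nat.sub_le _ _

theorem range_ceilGap {h : ℕ} (hh : 0 < h) : Set.range (ceilGap h) = Set.Iic (h - 1) := by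
  refine (Set.range_subset_iff.2 (ceilGap_le h)).antisymm fun s (hs : s ≤ h - 1) => ⟨h - 1 - s, ?_⟩
  have hmod : (h - 1 - s) % h = h - 1 - s := Nat.mod_eq_of_lt (by omega)
  simp only [ceilGap, hmod]
  omega

section StarEnergy

variable {m h : ℕ} {L : ℝ} {nn c : ℕ → ℝ}

theorem energy_succ_eq (hh : 0 < h) (hmh : m = 2 * h)
    (hn : ∀ j r : ℕ, 1 ≤ r → r ≤ m →
      nn (j * m + r) = if r ≤ m / 2
        then π ^ 2 * (m : ℝ) ^ 2 * ((j : ℝ) + 1 / 2) ^ 2 / L ^ 2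
        else π ^ 2 * (m : ℝ) ^ 2 * ((j : ℝ) + 1) ^ 2 / L ^ 2) (n : ℕ) :
    nn (n + 1) = π ^ 2 * ((n + 1 + ceilGap h n : ℕ) : ℝ) ^ 2 / L ^ 2 := by
  have hdiv := Nat.div_add_mod' n m
  set j := n / m
  set t := n % m
  have ht : t < m := Nat.mod_lt n (by omega)
  have hsucc : n + 1 = j * m + (t + 1) := by omega
  have hmod : n % h = t % h := (Nat.mod_mod_of_dvd n ⟨2, by rw [hmh, mul_comm]⟩).symm
  rw [ceilGap, hmod, hsucc, hn j (t + 1) (by omega) ht]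
  split_ifs with hth
  · have hgap : j * m + (t + 1) + (h - 1 - t % h) = j * m + h := by
      rw [Nat.mod_eq_of_lt (by omega : t < h)]
      omega
    rw [hgap, hmh]
    push_cast
    ring
  · have hgap : j * m + (t + 1) + (h - 1 - t % h) = (j + 1) * m := by
      rw [Nat.mod_eq_sub_mod (by omega : h ≤ t), Nat.mod_eq_of_lt (by omega : t - h < h)]
      rw [add_mul, one_mul]
      omega
    rw [hgap, hmh]
    push_cast
    ring

theorem tendsto_deviation_sub_ceilGap (hh : 0 < h) (hmh : m = 2 * h)
    (hn : ∀ j r : ℕ, 1 ≤ r → r ≤ m →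
      nn (j * m + r) = if r ≤ m / 2
        then π ^ 2 * (m : ℝ) ^ 2 * ((j : ℝ) + 1 / 2) ^ 2 / L ^ 2
        else π ^ 2 * (m : ℝ) ^ 2 * ((j : ℝ) + 1) ^ 2 / L ^ 2)
    (hc : ∀ k : ℕ, c k = (nn k - π ^ 2 * (k : ℝ) ^ 2 / L ^ 2) / (k : ℝ)) :
    Tendsto (fun n : ℕ => c (n + 1) - 2 * π ^ 2 * (ceilGap h n : ℝ) / L ^ 2) atTop (𝓝 0) := by
  have hdev : ∀ n : ℕ, c (n + 1) - 2 * π ^ 2 * (ceilGap h n : ℝ) / L ^ 2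
      = π ^ 2 * (ceilGap h n : ℝ) ^ 2 / L ^ 2 / ((n : ℝ) + 1) := fun n => by
    rw [hc, energy_succ_eq hh hmh hn]
    push_cast
    field_simp
    ring
  simp_rw [hdev]
  refine squeeze_zero (fun n => by positivity) (fun n => ?_)
    (tendsto_const_div_atTop_nhds_zero_nat (π ^ 2 * (h : ℝ) ^ 2 / L ^ 2) |>.comp
      (tendsto_add_atTop_nat 1))
  simp only [Function.comp_apply, Nat.cast_add, Nat.cast_one]
  gcongr
  exact_mod_cast (ceilGap_le h n).trans (Nat.sub_le h 1)

end StarEnergy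

/-- Even-`m` case of the final proposition of Section 6.1 (Neumann energies of
the equilateral `m`-star): the cluster point set is
`{2π²s/L² : 0 ≤ s ≤ m/2 − 1}`, which has exactly `m/2` elements. -/
theorem stmt12 (m : ℕ) (hm : 4 ≤ m) (heven : Even m) (L : ℝ) (hL : 0 < L)
    (nn c : ℕ → ℝ)
    (hn : ∀ j r : ℕ, 1 ≤ r → r ≤ m →
      nn (j * m + r) = if r ≤ m / 2
        then π ^ 2 * (m : ℝ) ^ 2 * ((j : ℝ) + 1 / 2) ^ 2 / L ^ 2
        else π ^ 2 * (m : ℝ) ^ 2 * ((j : ℝ) + 1) ^ 2 / L ^ 2)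
    (hc : ∀ k : ℕ, c k = (nn k - π ^ 2 * (k : ℝ) ^ 2 / L ^ 2) / (k : ℝ)) :
    {x : ℝ | MapClusterPt x atTop (fun n : ℕ => c (n + 1))}
      = {y : ℝ | ∃ s : ℕ, s ≤ m / 2 - 1 ∧ y = 2 * π ^ 2 * (s : ℝ) / L ^ 2}
    ∧ {x : ℝ | MapClusterPt x atTop (fun n : ℕ => c (n + 1))}.ncard = m / 2 := by
  obtain ⟨h, hmh⟩ := heven
  have hh : 0 < h := by omega
  have hhalf : m / 2 = h := by omega
  set v : ℕ → ℝ := fun s => 2 * π ^ 2 * (s : ℝ) / L ^ 2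
  have hv : StrictMono v := fun a b hab => by
    simp only [v]
    gcongr
  have hclusters : {x | MapClusterPt x atTop (fun n => c (n + 1))} = v '' Set.Iic (h - 1) := by
    rw [setOf_mapClusterPt_eq_of_tendsto_sub (v := v ∘ ceilGap h)
        (tendsto_deviation_sub_ceilGap hh (by omega) hn hc),
      ((ceilGap_periodic h).comp v).setOf_mapClusterPt_atTop hh, Set.range_comp, range_ceilGap hh]
  have htarget : {y : ℝ | ∃ s : ℕ, s ≤ m / 2 - 1 ∧ y = 2 * π ^ 2 * (s : ℝ) / L ^ 2}
      = v '' Set.Iic (h - 1) := by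
    ext y
    simp only [hhalf, v, Set.mem_ofPred_eq, Set.mem_image, Set.mem_Iic, eq_comm]
  rw [hclusters, htarget, Set.ncard_image_of_injective _ hv.injective, ← Finset.coe_Iic,
    Set.ncard_coe_finset, Nat.card_Iic, hhalf]
  exact ⟨rfl, Nat.sub_add_cancel hh⟩
end
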